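/- In the k-bonacci word, the n-th occurrence of the letter j lies inside the n-th block of the factorization ω = θ^{j+1}(ω_1)θ^{j+1}(ω_2)θ^{j+1}(ω_3)⋯, at distance 2^j from the start of that block; equivalently, X^j_n = 2^j + Σ_{m<n} |θ^{j+1}(ω_m)|. -/

import Mathlib

/-- The k-bonacci substitution on the alphabet {0,…,k−1}. -/
def subW (k : ℕ) (w : List ℕ) : List ℕ :=
  w.flatMap (fun j => if j + 1 < k then [0, j + 1] else [0])

/-- The k-bonacci word (0-indexed: `kbonacci k (m-1)` is the letter ω_m). -/
def kbonacci (k n : ℕ) : ℕ := ((subW k)^[n + 1] [0]).getD n 0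

/-- X^j_n: the 1-based position of the n-th (1-based) occurrence of letter j. -/
noncomputable def Xpos (k j n : ℕ) : ℕ :=
  Nat.nth (fun m => kbonacci k m = j) (n - 1) + 1

/-!
For `k ≥ 2` we have `θ(0) = 01`, so `θ^M(0)` is a prefix of `θ^(M+1)(0)` and `ω` is the limit of
these words and a fixed point of every power of `θ`.
Since `θ` inserts a `0` before every letter and raises every letter below `k - 1` by one,
induction on `j` shows `θ^(j+1)(a) = P j S` for every letter `a`, with `|P| = 2^j - 1`, all letters
of `P` below `j`, and no `j` in `S`. So every block `θ^(j+1)(ω_m)` contains exactly one `j`, at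
offset `2^j - 1`, which locates the `n`-th `j` of `ω`.
-/

theorem Nat.nth_count_eq_of_map_range {α : Type*} [DecidableEq α] {f : ℕ → α}
    {L : List α} {a : α}
    (h : (List.range (L.length + 1)).map f = L ++ [a]) :
    Nat.nth (fun m => f m = a) (L.count a) = L.length := by
  rw [List.range_succ, List.map_append, List.map_singleton] at h
  obtain ⟨hL, hlast⟩ := List.append_inj' h rfl
  have hcount : Nat.count (fun m => f m = a) L.length = L.count a := by
    rw [Nat.count, List.count]
    nth_rw 2 [← hL]
    rw [List.countP_map]
    simp only [Function.comp_def, beq_eq_decide]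
  rw [← hcount]
  exact Nat.nth_count (List.singleton_inj.mp hlast)

theorem List.eq_map_range_of_prefix {α : Type*} {f : ℕ → α} {l : List α} {N : ℕ}
    (h : l <+: (List.range N).map f) : l = (List.range l.length).map f := by
  have hle : l.length ≤ N := by simpa using h.length_le
  conv_lhs => rw [List.prefix_iff_eq_take.mp h]
  rw [← List.map_take, List.take_range, min_eq_left hle]

section Substitution

variable {k : ℕ}

theorem subW_singleton (a : ℕ) : subW k [a] = if a + 1 < k then [0, a + 1] else [0] := by
  simp [subW]

theorem subW_append (u v : List ℕ) : subW k (u ++ v) = subW k u ++ subW k v :=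
  List.flatMap_append

theorem iterate_subW_append (r : ℕ) (u v : List ℕ) :
    (subW k)^[r] (u ++ v) = (subW k)^[r] u ++ (subW k)^[r] v := by
  induction r generalizing u v with
  | zero => rfl
  | succ r ih => simp only [Function.iterate_succ_apply, subW_append, ih]

theorem iterate_subW_nil (r : ℕ) : (subW k)^[r] [] = [] :=
  Function.iterate_fixed rfl r

theorem iterate_subW_ne_nil (r : ℕ) {w : List ℕ} (hw : w ≠ []) : (subW k)^[r] w ≠ [] := by
  induction r generalizing w with
  | zero => exact hw
  | succ r ih =>
    obtain ⟨a, t, rfl⟩ := List.exists_cons_of_ne_nil hw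
    refine ih ?_
    simp only [subW, List.flatMap_cons]
    split <;> simp

theorem List.IsPrefix.iterate_subW (r : ℕ) {u v : List ℕ} (h : u <+: v) :
    (subW k)^[r] u <+: (subW k)^[r] v := by
  obtain ⟨t, rfl⟩ := h
  rw [iterate_subW_append]
  exact List.prefix_append _ _

theorem mem_subW {c : ℕ} {w : List ℕ} (h : c ∈ subW k w) : c = 0 ∨ ∃ b ∈ w, c = b + 1 := by
  simp only [subW, List.mem_flatMap] at h
  obtain ⟨b, hb, hc⟩ := h
  split at hc <;> grind

theorem length_subW_of_forall_lt {w : List ℕ} (h : ∀ b ∈ w, b + 1 < k) :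
    (subW k w).length = 2 * w.length := by
  induction w with
  | nil => rfl
  | cons a t ih =>
    rw [← List.singleton_append, subW_append, subW_singleton, if_pos (h a (by simp)),
      List.length_append, ih (fun b hb => h b (by simp [hb]))]
    simp only [List.length_cons, List.length_nil, List.length_append]
    omega

theorem length_iterate_subW_map_range (r : ℕ) (f : ℕ → ℕ) (i : ℕ) :
    ((subW k)^[r] ((List.range i).map f)).length =
      ∑ m ∈ Finset.range i, ((subW k)^[r] [f m]).length := by
  induction i with
  | zero => simp [iterate_subW_nil]
  | succ i ih =>
    rw [List.range_succ, List.map_append, iterate_subW_append, List.length_append, ih,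
      Finset.sum_range_succ, List.map_singleton]

theorem exists_iterate_subW_singleton_eq {j : ℕ} (hjk : j < k) (a : ℕ) : ∃ P S : List ℕ,
    (subW k)^[j + 1] [a] = P ++ j :: S ∧ P.length = 2 ^ j - 1 ∧
      (∀ b ∈ P, b < j) ∧ j ∉ S := by
  induction j with
  | zero =>
    by_cases h : a + 1 < k
    · exact ⟨[], [a + 1], by simp [subW_singleton, h], rfl, by simp, by simp⟩
    · exact ⟨[], [], by simp [subW_singleton, h], rfl, by simp, by simp⟩
  | succ j ih =>
    obtain ⟨P, S, hPS, hlen, hP, hS⟩ := ih (by omega)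
    refine ⟨subW k P ++ [0], subW k S, ?_, ?_, ?_, ?_⟩
    · rw [Function.iterate_succ_apply', hPS, ← List.singleton_append, subW_append, subW_append,
        subW_singleton, if_pos hjk]
      simp
    · have hP1 : ∀ b ∈ P, b + 1 < k := fun b hb => by have := hP b hb; omega
      rw [List.length_append, length_subW_of_forall_lt hP1, hlen, List.length_singleton,
        pow_succ]
      have := Nat.one_le_two_pow (n := j)
      omega
    · intro b hb
      rcases List.mem_append.mp hb with hb | hb
      · rcases mem_subW hb with rfl | ⟨c, hc, rfl⟩
        · omega
        · have := hP c hc; omega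
      · rw [List.mem_singleton] at hb; omega
    · intro hb
      rcases mem_subW hb with h | ⟨c, hc, hcj⟩
      · omega
      · exact hS (by rwa [Nat.succ_inj.mp hcj])

theorem count_iterate_subW_self {j : ℕ} (hjk : j < k) (l : List ℕ) :
    ((subW k)^[j + 1] l).count j = l.length := by
  induction l with
  | nil => simp [iterate_subW_nil]
  | cons a t ih =>
    obtain ⟨P, S, hPS, -, hP, hS⟩ := exists_iterate_subW_singleton_eq hjk a
    rw [← List.singleton_append, iterate_subW_append, List.count_append, ih, hPS,
      List.count_append, List.count_eq_zero.mpr fun h => (hP j h).false,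
      List.count_cons_self, List.count_eq_zero.mpr hS]
    simp [Nat.add_comm]

variable (hk : 2 ≤ k)
include hk

theorem iterate_subW_zero_succ (M : ℕ) :
    (subW k)^[M + 1] [0] = (subW k)^[M] [0] ++ (subW k)^[M] [1] := by
  have h : subW k [0] = [0] ++ [1] := by simp [subW_singleton, show 1 < k by omega]
  rw [Function.iterate_succ_apply, h, iterate_subW_append]

theorem iterate_subW_zero_prefix {M M' : ℕ} (h : M ≤ M') :
    (subW k)^[M] [0] <+: (subW k)^[M'] [0] :=
  Nat.rel_of_forall_rel_succ_of_le (· <+: ·)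
    (fun M => iterate_subW_zero_succ hk M ▸ List.prefix_append _ _) h

theorem lt_length_iterate_subW_zero (M : ℕ) : M < ((subW k)^[M] [0]).length := by
  induction M with
  | zero => simp
  | succ M ih =>
    rw [iterate_subW_zero_succ hk, List.length_append]
    have := List.length_pos_iff.mpr (iterate_subW_ne_nil (k := k) M (List.cons_ne_nil 1 []))
    omega

theorem iterate_subW_zero_eq_map_range (M : ℕ) :
    (subW k)^[M] [0] = (List.range ((subW k)^[M] [0]).length).map (kbonacci k) := by
  refine List.ext_getElem (by simp) fun m hm _ => ?_
  have hm' := lt_length_iterate_subW_zero hk (m + 1)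
  rw [List.getElem_map, List.getElem_range, kbonacci, List.getD_eq_getElem _ _ (by omega),
    (iterate_subW_zero_prefix hk (le_max_left M (m + 1))).getElem hm,
    (iterate_subW_zero_prefix hk (le_max_right M (m + 1))).getElem]

end Substitution

theorem nth_kbonacci_eq {k j : ℕ} (hk : 2 ≤ k) (hjk : j < k) (i : ℕ) :
    Nat.nth (fun m => kbonacci k m = j) i =
      2 ^ j - 1 + ∑ m ∈ Finset.range i, ((subW k)^[j + 1] [kbonacci k m]).length := by
  obtain ⟨P, S, hblock, hPlen, hPlt, -⟩ := exists_iterate_subW_singleton_eq hjk (kbonacci k i)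
  set L := (subW k)^[j + 1] ((List.range i).map (kbonacci k)) ++ P
  have hprefix : L ++ [j] <+: (subW k)^[j + 1 + (i + 1)] [0] := by
    have hw : (List.range (i + 1)).map (kbonacci k) <+: (subW k)^[i + 1] [0] := by
      rw [iterate_subW_zero_eq_map_range hk (i + 1)]
      refine List.IsPrefix.map _ ?_
      have := List.take_prefix (i + 1) (List.range ((subW k)^[i + 1] [0]).length)
      rwa [List.take_range, min_eq_left (lt_length_iterate_subW_zero hk (i + 1)).le] at this
    have := hw.iterate_subW (k := k) (j + 1)
    rw [List.range_succ, List.map_append, List.map_singleton, iterate_subW_append, hblock,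
      ← Function.iterate_add_apply] at this
    refine List.IsPrefix.trans ?_ this
    simp [L]
  have hL := List.eq_map_range_of_prefix (iterate_subW_zero_eq_map_range hk _ ▸ hprefix)
  rw [List.length_append, List.length_singleton] at hL
  have hcount : L.count j = i := by
    rw [List.count_append, count_iterate_subW_self hjk, List.length_map, List.length_range,
      List.count_eq_zero.mpr fun h => (hPlt j h).false, add_zero]
  calc Nat.nth (fun m => kbonacci k m = j) i = L.length :=
        hcount ▸ Nat.nth_count_eq_of_map_range hL.symm
    _ = _ := by rw [List.length_append, length_iterate_subW_map_range, hPlen, add_comm]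

theorem position_in_block_general (k j : ℕ) (hk : 2 ≤ k) (hj : j ≤ k - 1)
    (n : ℕ) :
    Xpos k j n = 2 ^ j +
      ∑ m ∈ Finset.range (n - 1), ((subW k)^[j + 1] [kbonacci k m]).length := by
  rw [Xpos, nth_kbonacci_eq hk (by omega)]
  have := Nat.one_le_two_pow (n := j)
  omega

/-- In the factorization ω = θ^{j+1}(ω_1)θ^{j+1}(ω_2)⋯, the n-th occurrence of the
letter j lies in the n-th block at distance 2^j from its start:
X^j_n = 2^j + Σ_{m<n} |θ^{j+1}(ω_m)|. -/
theorem position_in_block (k j : ℕ) (hk : 2 ≤ k) (hj : j ≤ k - 1)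
    (n : ℕ) (hn : 1 ≤ n) :
    Xpos k j n = 2 ^ j +
      ∑ m ∈ Finset.range (n - 1), ((subW k)^[j + 1] [kbonacci k m]).length :=
  position_in_block_general k j hk hj n
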